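/- arXiv:2510.06493 — 2 statements merged into one kernel-verified Lean document; each statement's English description precedes it below -/
import Mathlib

section
/- Let n ≥ 1 and set N = 2n+1. Then: P_up^{(0,0)}(N) ∩ P_up^{(1,0)}(N) = {blank_N, botright_N}; P_up^{(0,0)}(N) ∩ P_up^{(1,2)}(N) = {blank_N, botleft_N}; P_up^{(0,0)}(N) ∩ P_up^{(0,2)}(N) = {blank_N}; P_up^{(1,0)}(N) ∩ P_up^{(1,2)}(N) = {blank_N, top_N}; P_up^{(1,0)}(N) ∩ P_up^{(0,2)}(N) = {blank_N}; and P_up^{(1,2)}(N) ∩ P_up^{(0,2)}(N) = {blank_N}. -/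
/-- Whether the unit triangle at row `r`, column `c` of the Sierpiński triangle is filled:
upward units `(r, 2j)` are filled iff `choose r j` is odd; downward units are unfilled. -/
def filled (r c : ℕ) : Bool :=
  decide (c % 2 = 0 ∧ Nat.choose r (c / 2) % 2 = 1)

/-- The upward pattern of size `n` at upward position `(r, c)`. -/
def upPattern (n r c : ℕ) : ℕ × ℕ → Bool := fun q =>
  if q.1 < n ∧ q.2 ≤ 2 * q.1 then filled (r + q.1) (c + q.2) else false

/-- The set of all upward patterns of size `n` occurring in the Sierpiński triangle. -/
def Pup (n : ℕ) : Set (ℕ × ℕ → Bool) :=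
  { p | ∃ r c : ℕ, c % 2 = 0 ∧ c ≤ 2 * r ∧ p = upPattern n r c }

/-- The downward pattern of size `n` at downward position `(r, c)`. -/
def downPattern (n r c : ℕ) : ℕ × ℕ → Bool := fun q =>
  if q.1 < n ∧ q.2 ≤ 2 * (n - 1 - q.1) then filled (r + q.1) (c + 2 * q.1 + q.2) else false

/-- The set of all downward patterns of size `n` occurring in the Sierpiński triangle. -/
def Pdown (n : ℕ) : Set (ℕ × ℕ → Bool) :=
  { p | ∃ r c : ℕ, c % 2 = 1 ∧ c + 2 * (n - 1) ≤ 2 * r ∧ p = downPattern n r c }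

/-- The top-cut pattern of size `n` at upward position `(r, c)` (apex unit removed). -/
def topCutPattern (n r c : ℕ) : ℕ × ℕ → Bool := fun q =>
  if 1 ≤ q.1 ∧ q.1 < n ∧ q.2 ≤ 2 * q.1 then filled (r + q.1) (c + q.2) else false

/-- The set of all top-cut patterns of size `n` occurring in the Sierpiński triangle. -/
def PtopCut (n : ℕ) : Set (ℕ × ℕ → Bool) :=
  { p | ∃ r c : ℕ, c % 2 = 0 ∧ c ≤ 2 * r ∧ p = topCutPattern n r c }

/-- The bottom-cut pattern of size `n` at upward position `(r, c)`
(both bottom corner units removed). -/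
def botCutPattern (n r c : ℕ) : ℕ × ℕ → Bool := fun q =>
  if (q.1 < n ∧ q.2 ≤ 2 * q.1) ∧ ¬(q.1 = n - 1 ∧ (q.2 = 0 ∨ q.2 = 2 * (n - 1)))
  then filled (r + q.1) (c + q.2) else false

/-- The set of all bottom-cut patterns of size `n` occurring in the Sierpiński triangle. -/
def PbotCut (n : ℕ) : Set (ℕ × ℕ → Bool) :=
  { p | ∃ r c : ℕ, c % 2 = 0 ∧ c ≤ 2 * r ∧ p = botCutPattern n r c }

/-- The fully-cut pattern of size `n` at upward position `(r, c)`
(all three corner units removed). -/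
def fullyCutPattern (n r c : ℕ) : ℕ × ℕ → Bool := fun q =>
  if (q.1 < n ∧ q.2 ≤ 2 * q.1) ∧ q ≠ (0, 0) ∧ ¬(q.1 = n - 1 ∧ (q.2 = 0 ∨ q.2 = 2 * (n - 1)))
  then filled (r + q.1) (c + q.2) else false

/-- The set of all fully-cut patterns of size `n` occurring in the Sierpiński triangle. -/
def PfullyCut (n : ℕ) : Set (ℕ × ℕ → Bool) :=
  { p | ∃ r c : ℕ, c % 2 = 0 ∧ c ≤ 2 * r ∧ p = fullyCutPattern n r c }

/-- Upward patterns of size `m` occurring inside the approximation `T_N`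
(rows `0, …, 2^N - 1`). -/
def PupN (N m : ℕ) : Set (ℕ × ℕ → Bool) :=
  { p | ∃ r c : ℕ, c % 2 = 0 ∧ c ≤ 2 * r ∧ r + m ≤ 2 ^ N ∧ p = upPattern m r c }

/-- Upward patterns of size `n` at positions with `r ≡ ρ [MOD 2]` and `c ≡ γ [MOD 4]`. -/
def PupRC (n ρ γ : ℕ) : Set (ℕ × ℕ → Bool) :=
  { p | ∃ r c : ℕ, c % 2 = 0 ∧ c ≤ 2 * r ∧ r % 2 = ρ ∧ c % 4 = γ ∧ p = upPattern n r c }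

/-- Downward patterns of size `n` at positions with `r ≡ ρ [MOD 2]` and `c ≡ γ [MOD 4]`. -/
def PdownRC (n ρ γ : ℕ) : Set (ℕ × ℕ → Bool) :=
  { p | ∃ r c : ℕ, c % 2 = 1 ∧ c + 2 * (n - 1) ≤ 2 * r ∧ r % 2 = ρ ∧ c % 4 = γ ∧
      p = downPattern n r c }

/-- Top-cut patterns of size `n` at positions with `r ≡ ρ [MOD 2]` and `c ≡ γ [MOD 4]`. -/
def PtopCutRC (n ρ γ : ℕ) : Set (ℕ × ℕ → Bool) :=
  { p | ∃ r c : ℕ, c % 2 = 0 ∧ c ≤ 2 * r ∧ r % 2 = ρ ∧ c % 4 = γ ∧ p = topCutPattern n r c }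

/-- Fully-cut patterns of size `n` at positions with `r ≡ ρ [MOD 2]` and `c ≡ γ [MOD 4]`. -/
def PfullyCutRC (n ρ γ : ℕ) : Set (ℕ × ℕ → Bool) :=
  { p | ∃ r c : ℕ, c % 2 = 0 ∧ c ≤ 2 * r ∧ r % 2 = ρ ∧ c % 4 = γ ∧ p = fullyCutPattern n r c }

/-- The everywhere-unfilled upward pattern. -/
def blankUp : ℕ × ℕ → Bool := fun _ => false

/-- The upward pattern that is filled exactly at the apex `(0, 0)`. -/
def topUp : ℕ × ℕ → Bool := fun q => decide (q = (0, 0))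

/-- The size-`N` upward pattern that is filled exactly at the bottom-left corner `(N-1, 0)`. -/
def botleftUp (N : ℕ) : ℕ × ℕ → Bool := fun q => decide (q = (N - 1, 0))

/-- The size-`N` upward pattern filled exactly at the bottom-right corner `(N-1, 2(N-1))`. -/
def botrightUp (N : ℕ) : ℕ × ℕ → Bool := fun q => decide (q = (N - 1, 2 * (N - 1)))

/-- The everywhere-unfilled downward pattern. -/
def blankDown : ℕ × ℕ → Bool := fun _ => false

/-- The size-`N` downward pattern filled exactly at the upward units along the top side:
positions `(0, m)` with `m` odd, `1 ≤ m ≤ 2N - 3`. -/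
def topsideDown (N : ℕ) : ℕ × ℕ → Bool := fun q =>
  decide (q.1 = 0 ∧ q.2 % 2 = 1 ∧ 1 ≤ q.2 ∧ q.2 ≤ 2 * N - 3)

/-- The size-`N` downward pattern filled exactly at the upward units along the left side:
positions `(k, 1)` with `0 ≤ k ≤ N - 2`. -/
def leftsideDown (N : ℕ) : ℕ × ℕ → Bool := fun q =>
  decide (q.2 = 1 ∧ q.1 ≤ N - 2)

/-- The size-`N` downward pattern filled exactly at the upward units along the right side:
positions `(k, 2(N-1-k) - 1)` with `0 ≤ k ≤ N - 2`. -/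
def rightsideDown (N : ℕ) : ℕ × ℕ → Bool := fun q =>
  decide (q.1 ≤ N - 2 ∧ q.2 = 2 * (N - 1 - q.1) - 1)

/-!
By Lucas' theorem, `choose (2u + ρ + k) (2b + ε + i)` is odd iff the parity bits are compatible,
`(i + ε) % 2 ≤ (k + ρ) % 2`, and `choose (u + (k + ρ) / 2) (b + (i + ε) / 2)` is odd. So the
upward pattern of size `2n + 1` at a position of class `(ρ, 2ε)` is the substitution image of
the size-`(n + 1)` parent array at `(u, 2b)`, read with offset `(ρ, ε)`. When positions of two
different classes carry the same pattern, comparing cells of suitable parities forces the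
parent array to vanish except at one corner, leaving only the blank pattern or a single
filled corner. Conversely, each of these patterns occurs in the required classes along the
edges of the zero triangle of rows `2^t, …, 2^(t+1) - 1`.
-/

open Nat

theorem choose_mod_two (x y : ℕ) :
    choose x y % 2 = if y % 2 ≤ x % 2 then choose (x / 2) (y / 2) % 2 else 0 := by
  have : Fact (Nat.Prime 2) := ⟨Nat.prime_two⟩
  have h := (Choose.choose_modEq_choose_mod_mul_choose_div_nat (n := x) (k := y) (p := 2)).symm
  rcases Nat.mod_two_eq_zero_or_one x with hx | hx <;>
    rcases Nat.mod_two_eq_zero_or_one y with hy | hy <;>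
    simp_all [Nat.ModEq]

theorem choose_two_pow_add_mod_two {t m j : ℕ} (hm : m < 2 ^ t) (hj : j < 2 ^ t) :
    choose (2 ^ t + m) j % 2 = choose m j % 2 := by
  induction t generalizing m j with
  | zero => simp_all
  | succ t ih =>
    have ht : 2 ^ (t + 1) = 2 * 2 ^ t := pow_succ' 2 t
    rw [choose_mod_two, choose_mod_two m, show (2 ^ (t + 1) + m) / 2 = 2 ^ t + m / 2 by omega,
      show (2 ^ (t + 1) + m) % 2 = m % 2 by omega, ih (by omega) (by omega)]

theorem choose_two_pow_add_two_pow_mod_two {t m : ℕ} (hm : m < 2 ^ t) :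
    choose (2 ^ t + m) (2 ^ t) % 2 = 1 := by
  rw [choose_symm_add, choose_two_pow_add_mod_two hm hm, choose_self]

theorem choose_two_pow_sub_one_mod_two {t a : ℕ} (ha : a < 2 ^ t) :
    choose (2 ^ t - 1) a % 2 = 1 := by
  induction t generalizing a with
  | zero => simp_all
  | succ t ih =>
    have ht : 2 ^ (t + 1) = 2 * 2 ^ t := pow_succ' 2 t
    rw [choose_mod_two, if_pos (by omega), show (2 ^ (t + 1) - 1) / 2 = 2 ^ t - 1 by omega]
    exact ih (by omega)

/-- `upCells r j k i` is the unit in row `r + k`, column `2 * (j + i)`: cell `(k, 2 * i)` of the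
upward pattern at `(r, 2 * j)`. -/
def upCells (r j k i : ℕ) : Bool := decide (choose (r + k) (j + i) % 2 = 1)

/-- The substitution in upward-unit coordinates: the parent unit `(κ, ι)` of `f` becomes the
upward units `(2κ, 2ι)`, `(2κ + 1, 2ι)` and `(2κ + 1, 2ι + 1)`, while `(2κ, 2ι + 1)` is the centre
of a downward parent unit and stays empty; the refined grid is read from the offset `(ρ, ε)`. -/
def childCell (ρ ε : ℕ) (f : ℕ → ℕ → Bool) (k i : ℕ) : Bool :=
  decide ((i + ε) % 2 ≤ (k + ρ) % 2) && f ((k + ρ) / 2) ((i + ε) / 2)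

theorem upCells_two_mul_add (u b ρ ε k i : ℕ) :
    upCells (2 * u + ρ) (2 * b + ε) k i = childCell ρ ε (upCells u b) k i := by
  rw [upCells, choose_mod_two, show (2 * u + ρ + k) / 2 = u + (k + ρ) / 2 by omega,
    show (2 * b + ε + i) / 2 = b + (i + ε) / 2 by omega,
    show (2 * u + ρ + k) % 2 = (k + ρ) % 2 by omega,
    show (2 * b + ε + i) % 2 = (i + ε) % 2 by omega]
  unfold childCell upCells
  split_ifs <;> simp_all

theorem upPattern_two_mul_apply {N r j k i : ℕ} (hk : k < N) (hi : i ≤ k) :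
    upPattern N r (2 * j) (k, 2 * i) = upCells r j k i := by
  simp [upPattern, filled, upCells, hk, hi, ← Nat.mul_add]

theorem upPattern_apply_of_odd {N r j k m : ℕ} (hm : m % 2 = 1) :
    upPattern N r (2 * j) (k, m) = false := by
  have : (2 * j + m) % 2 = 1 := by omega
  simp [upPattern, filled, this]

theorem upCells_eq_of_upPattern_eq {N r j r' j' : ℕ}
    (h : upPattern N r (2 * j) = upPattern N r' (2 * j')) {k i : ℕ} (hk : k < N) (hi : i ≤ k) :
    upCells r j k i = upCells r' j' k i := by
  rw [← upPattern_two_mul_apply hk hi, h, upPattern_two_mul_apply hk hi]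

theorem upPattern_eq_of_upCells {N r j : ℕ} {p : ℕ × ℕ → Bool}
    (hp : ∀ k m, p (k, m) = true → k < N ∧ m ≤ 2 * k ∧ m % 2 = 0)
    (h : ∀ k i, k < N → i ≤ k → upCells r j k i = p (k, 2 * i)) :
    upPattern N r (2 * j) = p := by
  funext ⟨k, m⟩
  rcases Nat.mod_two_eq_zero_or_one m with hm | hm
  · obtain ⟨i, rfl⟩ : ∃ i, m = 2 * i := ⟨m / 2, by omega⟩
    by_cases hki : k < N ∧ i ≤ k
    · rw [upPattern_two_mul_apply hki.1 hki.2, h k i hki.1 hki.2]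
    · have : p (k, 2 * i) = false := by
        by_contra hpk
        have := hp k (2 * i) (by simpa using hpk)
        omega
      simp only [upPattern, this]
      rw [if_neg (by omega)]
  · rw [upPattern_apply_of_odd hm]
    by_contra hpk
    have := hp k m (by simpa using hpk)
    omega

theorem upPattern_eq_blankUp_of_upCells {N r j : ℕ}
    (h : ∀ k i, k < N → i ≤ k → upCells r j k i = false) :
    upPattern N r (2 * j) = blankUp :=
  upPattern_eq_of_upCells (by simp [blankUp]) h

theorem upPattern_eq_point_of_upCells {N r j k₀ i₀ : ℕ} (hk₀ : k₀ < N) (hi₀ : i₀ ≤ k₀)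
    (h₀ : upCells r j k₀ i₀ = true)
    (h : ∀ k i, k < N → i ≤ k → ¬(k = k₀ ∧ i = i₀) → upCells r j k i = false) :
    upPattern N r (2 * j) = fun q => decide (q = (k₀, 2 * i₀)) := by
  refine upPattern_eq_of_upCells (fun k m hkm => ?_) fun k i hk hi => ?_
  · simp only [decide_eq_true_eq, Prod.mk.injEq] at hkm
    omega
  · by_cases hki : k = k₀ ∧ i = i₀
    · simp [hki, h₀]
    · rw [h k i hk hi hki, eq_comm, decide_eq_false_iff_not, Prod.mk.injEq]
      omega

theorem upPattern_eq_blankUp_or_point_of_upCells {N r j k₀ i₀ : ℕ} (hk₀ : k₀ < N) (hi₀ : i₀ ≤ k₀)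
    (h : ∀ k i, k < N → i ≤ k → ¬(k = k₀ ∧ i = i₀) → upCells r j k i = false) :
    upPattern N r (2 * j) = blankUp ∨
      upPattern N r (2 * j) = fun q => decide (q = (k₀, 2 * i₀)) := by
  cases h₀ : upCells r j k₀ i₀
  · refine .inl (upPattern_eq_blankUp_of_upCells fun k i hk hi => ?_)
    by_cases hki : k = k₀ ∧ i = i₀
    · rwa [hki.1, hki.2]
    · exact h k i hk hi hki
  · exact .inr (upPattern_eq_point_of_upCells hk₀ hi₀ h₀ h)

theorem upCells_two_mul_add_eq_false {n u b ρ ε : ℕ} {S : ℕ → ℕ → Prop} (hρ : ρ ≤ 1)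
    (hερ : ε ≤ ρ) (hf : ∀ κ ι, ι ≤ κ → κ ≤ n → ¬S κ ι → upCells u b κ ι = false)
    {k i : ℕ} (hk : k ≤ 2 * n) (hi : i ≤ k)
    (hS : (i + ε) % 2 ≤ (k + ρ) % 2 → ¬S ((k + ρ) / 2) ((i + ε) / 2)) :
    upCells (2 * u + ρ) (2 * b + ε) k i = false := by
  rw [upCells_two_mul_add, childCell]
  by_cases hpar : (i + ε) % 2 ≤ (k + ρ) % 2
  · rw [hf _ _ (by omega) (by omega) (hS hpar), Bool.and_false]
  · simp [hpar]

theorem upPattern_two_mul_add_eq_blankUp {n u b ρ ε : ℕ} (hρ : ρ ≤ 1) (hερ : ε ≤ ρ)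
    (hf : ∀ κ ι, ι ≤ κ → κ ≤ n → upCells u b κ ι = false) :
    upPattern (2 * n + 1) (2 * u + ρ) (2 * (2 * b + ε)) = blankUp :=
  upPattern_eq_blankUp_of_upCells fun _ _ hk hi =>
    upCells_two_mul_add_eq_false (S := fun _ _ => False) hρ hερ (fun κ ι hι hκ _ => hf κ ι hι hκ)
      (by omega) hi (by simp)

theorem upPattern_two_mul_add_eq_blankUp_or_point {n u b ρ ε κ₀ ι₀ k₀ i₀ : ℕ} (hρ : ρ ≤ 1)
    (hερ : ε ≤ ρ) (hf : ∀ κ ι, ι ≤ κ → κ ≤ n → ¬(κ = κ₀ ∧ ι = ι₀) → upCells u b κ ι = false)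
    (hk₀ : k₀ ≤ 2 * n) (hi₀ : i₀ ≤ k₀)
    (hcorner : ∀ k i, i ≤ k → k ≤ 2 * n → (i + ε) % 2 ≤ (k + ρ) % 2 →
      (k + ρ) / 2 = κ₀ → (i + ε) / 2 = ι₀ → k = k₀ ∧ i = i₀) :
    upPattern (2 * n + 1) (2 * u + ρ) (2 * (2 * b + ε)) = blankUp ∨
      upPattern (2 * n + 1) (2 * u + ρ) (2 * (2 * b + ε)) = fun q => decide (q = (k₀, 2 * i₀)) :=
  upPattern_eq_blankUp_or_point_of_upCells (by omega) hi₀ fun k i hk hi hki =>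
    upCells_two_mul_add_eq_false hρ hερ hf (by omega) hi fun hpar ⟨hκ, hι⟩ =>
      hki (hcorner k i hi (by omega) hpar hκ hι)

section ParentArrays

variable {n : ℕ} {f g : ℕ → ℕ → Bool}

theorem eq_false_of_childCell00_eq_childCell10
    (h : ∀ k i, i ≤ k → k < 2 * n + 1 → childCell 0 0 f k i = childCell 1 0 g k i) :
    ∀ κ ι, ι ≤ κ → κ ≤ n → ¬(κ = n ∧ ι = n) → f κ ι = false := by
  have below : ∀ κ ι, ι ≤ κ → κ < n → f κ ι = false := fun κ ι hι hκ => by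
    simpa [childCell, Nat.add_assoc, Nat.mul_add_div] using
      h (2 * κ + 1) (2 * ι + 1) (by omega) (by omega)
  have bottom : ∀ ι, ι < n → g n ι = false := fun ι hι => by
    simpa [childCell, Nat.add_assoc, Nat.mul_add_div] using
      (h (2 * n) (2 * ι + 1) (by omega) (by omega)).symm
  intro κ ι hι hκ hne
  rcases Nat.lt_or_ge κ n with hκn | hκn
  · exact below κ ι hι hκn
  · obtain rfl : κ = n := by omega
    simpa [childCell, Nat.mul_add_div, bottom ι (by omega)] using
      h (2 * κ) (2 * ι) (by omega) (by omega)

theorem eq_false_of_childCell00_eq_childCell11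
    (h : ∀ k i, i ≤ k → k < 2 * n + 1 → childCell 0 0 f k i = childCell 1 1 g k i) :
    ∀ κ ι, ι ≤ κ → κ ≤ n → ¬(κ = n ∧ ι = 0) → f κ ι = false := by
  have below : ∀ κ ι, ι ≤ κ → κ < n → f κ ι = false := fun κ ι hι hκ => by
    simpa [childCell, Nat.add_assoc, Nat.mul_add_div] using
      h (2 * κ + 1) (2 * ι) (by omega) (by omega)
  have bottom : ∀ ι, ι < n → g n (ι + 1) = false := fun ι hι => by
    obtain ⟨m, rfl⟩ : ∃ m, n = m + 1 := ⟨n - 1, by omega⟩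
    simpa [childCell, Nat.add_assoc, Nat.mul_add_div, below m ι (by omega) (by omega)] using
      h (2 * m + 1) (2 * ι + 1) (by omega) (by omega)
  intro κ ι hι hκ hne
  rcases Nat.lt_or_ge κ n with hκn | hκn
  · exact below κ ι hι hκn
  · obtain ⟨ι, rfl⟩ : ∃ ι', ι = ι' + 1 := ⟨ι - 1, by omega⟩
    obtain rfl : κ = n := by omega
    simpa [childCell, Nat.mul_add_div, bottom ι (by omega)] using
      h (2 * κ) (2 * (ι + 1)) (by omega) (by omega)

theorem eq_false_of_childCell00_eq_childCell01
    (h : ∀ k i, i ≤ k → k < 2 * n + 1 → childCell 0 0 f k i = childCell 0 1 g k i) :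
    ∀ κ ι, ι ≤ κ → κ ≤ n → f κ ι = false := fun κ ι hι hκ => by
  simpa [childCell, Nat.add_assoc, Nat.mul_add_div] using h (2 * κ) (2 * ι) (by omega) (by omega)

theorem eq_false_of_childCell10_eq_childCell11
    (h : ∀ k i, i ≤ k → k < 2 * n + 1 → childCell 1 0 f k i = childCell 1 1 g k i) :
    ∀ κ ι, ι ≤ κ → κ ≤ n → ¬(κ = 0 ∧ ι = 0) → f κ ι = false := by
  have offDiagonal : ∀ κ ι, ι ≤ κ → κ < n → f (κ + 1) ι = false := fun κ ι hι hκ => by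
    simpa [childCell, Nat.add_assoc, Nat.mul_add_div] using
      h (2 * κ + 1) (2 * ι) (by omega) (by omega)
  have diagonal : ∀ κ, κ < n → g (κ + 1) (κ + 1) = false := fun κ hκ => by
    simpa [childCell, Nat.add_assoc, Nat.mul_add_div] using
      (h (2 * κ + 1) (2 * κ + 1) (by omega) (by omega)).symm
  intro κ ι hι hκ hne
  obtain ⟨κ, rfl⟩ : ∃ κ', κ = κ' + 1 := ⟨κ - 1, by omega⟩
  rcases Nat.lt_or_ge ι (κ + 1) with hικ | hικ
  · exact offDiagonal κ ι (by omega) (by omega)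
  · obtain rfl : ι = κ + 1 := by omega
    simpa [childCell, Nat.mul_add_div, diagonal κ (by omega)] using
      h (2 * (κ + 1)) (2 * (κ + 1)) le_rfl (by omega)

theorem eq_false_of_childCell10_eq_childCell01
    (h : ∀ k i, i ≤ k → k < 2 * n + 1 → childCell 1 0 f k i = childCell 0 1 g k i) :
    ∀ κ ι, ι ≤ κ → κ ≤ n → f κ ι = false := fun κ ι hι hκ => by
  simpa [childCell, Nat.add_assoc, Nat.mul_add_div] using h (2 * κ) (2 * ι) (by omega) (by omega)

theorem eq_false_of_childCell11_eq_childCell01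
    (h : ∀ k i, i ≤ k → k < 2 * n + 1 → childCell 1 1 f k i = childCell 0 1 g k i) :
    ∀ κ ι, ι ≤ κ → κ ≤ n → f κ ι = false := fun κ ι hι hκ => by
  simpa [childCell, Nat.add_assoc, Nat.mul_add_div] using h (2 * κ) (2 * ι) (by omega) (by omega)

end ParentArrays

theorem exists_childCell_eq_of_mem_inter {N ρ ε ρ' ε' : ℕ} {p : ℕ × ℕ → Bool}
    (hp : p ∈ PupRC N ρ (2 * ε) ∩ PupRC N ρ' (2 * ε')) :
    ∃ u b u' b', p = upPattern N (2 * u + ρ) (2 * (2 * b + ε)) ∧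
      ∀ k i, i ≤ k → k < N →
        childCell ρ ε (upCells u b) k i = childCell ρ' ε' (upCells u' b') k i := by
  obtain ⟨⟨r, c, -, -, hr, hc, rfl⟩, ⟨r', c', -, -, hr', hc', hpp⟩⟩ := hp
  obtain ⟨u, rfl⟩ : ∃ u, r = 2 * u + ρ := ⟨r / 2, by omega⟩
  obtain ⟨b, rfl⟩ : ∃ b, c = 2 * (2 * b + ε) := ⟨c / 4, by omega⟩
  obtain ⟨u', rfl⟩ : ∃ u', r' = 2 * u' + ρ' := ⟨r' / 2, by omega⟩
  obtain ⟨b', rfl⟩ : ∃ b', c' = 2 * (2 * b' + ε') := ⟨c' / 4, by omega⟩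
  refine ⟨u, b, u', b', rfl, fun k i hi hk => ?_⟩
  rw [← upCells_two_mul_add, ← upCells_two_mul_add]
  exact upCells_eq_of_upPattern_eq hpp hk hi

theorem eight_mul_succ_le_two_pow (N : ℕ) : 8 * (N + 1) ≤ 2 ^ (N + 3) := by
  have := Nat.lt_two_pow_self (n := N)
  rw [pow_add]
  omega

theorem two_pow_add_three_mod_two (N : ℕ) : 2 ^ (N + 3) % 2 = 0 := by
  simp [pow_succ]

theorem blankUp_mem_PupRC {N ρ ε : ℕ} (hρ : ρ < 2) (hε : ε < 2) :
    blankUp ∈ PupRC N ρ (2 * ε) := by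
  have hT := eight_mul_succ_le_two_pow N
  have hT2 := two_pow_add_three_mod_two N
  refine ⟨2 ^ (N + 3) + ρ, 2 * (2 * N + ε), by omega, by omega, by omega, by omega,
    (upPattern_eq_of_upCells (by simp [blankUp]) fun k i hk hi => ?_).symm⟩
  rw [upCells, Nat.add_assoc, choose_two_pow_add_mod_two (by omega) (by omega),
    choose_eq_zero_of_lt (by omega)]
  rfl

theorem topUp_mem_PupRC {N ε : ℕ} (hN : 0 < N) (hε : ε < 2) : topUp ∈ PupRC N 1 (2 * ε) := by
  have hT := eight_mul_succ_le_two_pow N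
  have hT2 := two_pow_add_three_mod_two N
  refine ⟨2 ^ (N + 3) - 1, 2 * (2 * N + ε), by omega, by omega, by omega, by omega,
    (upPattern_eq_point_of_upCells (k₀ := 0) (i₀ := 0) hN le_rfl ?_ fun k i hk hi hki => ?_).symm⟩
  · simp [upCells, choose_two_pow_sub_one_mod_two (by omega : 2 * N + ε < 2 ^ (N + 3))]
  · rw [upCells, show 2 ^ (N + 3) - 1 + k = 2 ^ (N + 3) + (k - 1) by omega,
      choose_two_pow_add_mod_two (by omega) (by omega), choose_eq_zero_of_lt (by omega)]
    rfl

theorem botrightUp_eq (n : ℕ) :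
    botrightUp (2 * n + 1) = fun q => decide (q = (2 * n, 2 * (2 * n))) := by
  funext q
  simp [botrightUp]

theorem botleftUp_eq (n : ℕ) : botleftUp (2 * n + 1) = fun q => decide (q = (2 * n, 2 * 0)) := by
  funext q
  simp [botleftUp]

theorem topUp_eq : topUp = fun q => decide (q = (0, 2 * 0)) := rfl

theorem botrightUp_mem_PupRC {n ρ : ℕ} (hρ : ρ < 2) :
    botrightUp (2 * n + 1) ∈ PupRC (2 * n + 1) ρ 0 := by
  have hT := eight_mul_succ_le_two_pow n
  have hT2 := two_pow_add_three_mod_two n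
  refine ⟨2 ^ (n + 3) + ρ, 2 * (2 ^ (n + 3) - 2 * n), by omega, by omega, by omega, by omega, ?_⟩
  rw [upPattern_eq_point_of_upCells (k₀ := 2 * n) (i₀ := 2 * n) (by omega) le_rfl ?_
    fun k i hk hi hki => ?_]
  · exact (botrightUp_eq n).symm
  · rw [upCells, Nat.add_assoc, show 2 ^ (n + 3) - 2 * n + 2 * n = 2 ^ (n + 3) by omega,
      decide_eq_true_iff]
    exact choose_two_pow_add_two_pow_mod_two (by omega)
  · rw [upCells, Nat.add_assoc, choose_two_pow_add_mod_two (by omega) (by omega),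
      choose_eq_zero_of_lt (by omega)]
    rfl

theorem botleftUp_mem_PupRC {n ρ : ℕ} (hρ : ρ < 2) :
    botleftUp (2 * n + 1) ∈ PupRC (2 * n + 1) ρ (2 * ρ) := by
  have hT := eight_mul_succ_le_two_pow n
  have hT2 := two_pow_add_three_mod_two n
  refine ⟨2 ^ (n + 3) + ρ, 2 * (ρ + 2 * n), by omega, by omega, by omega, by omega, ?_⟩
  rw [upPattern_eq_point_of_upCells (k₀ := 2 * n) (i₀ := 0) (by omega) (by omega) ?_
    fun k i hk hi hki => ?_]
  · exact (botleftUp_eq n).symm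
  · rw [upCells, Nat.add_assoc, choose_two_pow_add_mod_two (by omega) (by omega),
      decide_eq_true_iff, Nat.add_zero, choose_self]
  · rw [upCells, Nat.add_assoc, choose_two_pow_add_mod_two (by omega) (by omega),
      choose_eq_zero_of_lt (by omega)]
    rfl

theorem PupRC_00_inter_10 (n : ℕ) :
    PupRC (2 * n + 1) 0 0 ∩ PupRC (2 * n + 1) 1 0 = {blankUp, botrightUp (2 * n + 1)} := by
  refine subset_antisymm (fun p hp => ?_) (Set.pair_subset
    ⟨blankUp_mem_PupRC (ε := 0) (by omega) (by omega),
      blankUp_mem_PupRC (ε := 0) (by omega) (by omega)⟩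
    ⟨botrightUp_mem_PupRC (by omega), botrightUp_mem_PupRC (by omega)⟩)
  obtain ⟨u, b, _, _, rfl, h⟩ := exists_childCell_eq_of_mem_inter (ε := 0) (ε' := 0) hp
  rw [Set.mem_insert_iff, Set.mem_singleton_iff, botrightUp_eq]
  exact upPattern_two_mul_add_eq_blankUp_or_point zero_le_one le_rfl
    (eq_false_of_childCell00_eq_childCell10 h) le_rfl le_rfl fun _ _ _ _ _ _ _ => by omega

theorem PupRC_00_inter_12 (n : ℕ) :
    PupRC (2 * n + 1) 0 0 ∩ PupRC (2 * n + 1) 1 2 = {blankUp, botleftUp (2 * n + 1)} := by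
  refine subset_antisymm (fun p hp => ?_) (Set.pair_subset
    ⟨blankUp_mem_PupRC (ε := 0) (by omega) (by omega),
      blankUp_mem_PupRC (ε := 1) (by omega) (by omega)⟩
    ⟨botleftUp_mem_PupRC (ρ := 0) (by omega), botleftUp_mem_PupRC (ρ := 1) (by omega)⟩)
  obtain ⟨u, b, _, _, rfl, h⟩ := exists_childCell_eq_of_mem_inter (ε := 0) (ε' := 1) hp
  rw [Set.mem_insert_iff, Set.mem_singleton_iff, botleftUp_eq]
  exact upPattern_two_mul_add_eq_blankUp_or_point zero_le_one le_rfl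
    (eq_false_of_childCell00_eq_childCell11 h) le_rfl (by omega) fun _ _ _ _ _ _ _ => by omega

theorem PupRC_00_inter_02 (n : ℕ) :
    PupRC (2 * n + 1) 0 0 ∩ PupRC (2 * n + 1) 0 2 = {blankUp} := by
  refine subset_antisymm (fun p hp => ?_) (Set.singleton_subset_iff.2
    ⟨blankUp_mem_PupRC (ε := 0) (by omega) (by omega),
      blankUp_mem_PupRC (ε := 1) (by omega) (by omega)⟩)
  obtain ⟨u, b, _, _, rfl, h⟩ := exists_childCell_eq_of_mem_inter (ε := 0) (ε' := 1) hp
  exact upPattern_two_mul_add_eq_blankUp zero_le_one le_rfl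
    (eq_false_of_childCell00_eq_childCell01 h)

theorem PupRC_10_inter_12 (n : ℕ) :
    PupRC (2 * n + 1) 1 0 ∩ PupRC (2 * n + 1) 1 2 = {blankUp, topUp} := by
  refine subset_antisymm (fun p hp => ?_) (Set.pair_subset
    ⟨blankUp_mem_PupRC (ε := 0) (by omega) (by omega),
      blankUp_mem_PupRC (ε := 1) (by omega) (by omega)⟩
    ⟨topUp_mem_PupRC (ε := 0) (by omega) (by omega),
      topUp_mem_PupRC (ε := 1) (by omega) (by omega)⟩)
  obtain ⟨u, b, _, _, rfl, h⟩ := exists_childCell_eq_of_mem_inter (ε := 0) (ε' := 1) hp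
  rw [Set.mem_insert_iff, Set.mem_singleton_iff, topUp_eq]
  exact upPattern_two_mul_add_eq_blankUp_or_point le_rfl zero_le_one
    (eq_false_of_childCell10_eq_childCell11 h) (by omega) le_rfl fun _ _ _ _ _ _ _ => by omega

theorem PupRC_10_inter_02 (n : ℕ) :
    PupRC (2 * n + 1) 1 0 ∩ PupRC (2 * n + 1) 0 2 = {blankUp} := by
  refine subset_antisymm (fun p hp => ?_) (Set.singleton_subset_iff.2
    ⟨blankUp_mem_PupRC (ε := 0) (by omega) (by omega),
      blankUp_mem_PupRC (ε := 1) (by omega) (by omega)⟩)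
  obtain ⟨u, b, _, _, rfl, h⟩ := exists_childCell_eq_of_mem_inter (ε := 0) (ε' := 1) hp
  exact upPattern_two_mul_add_eq_blankUp le_rfl zero_le_one
    (eq_false_of_childCell10_eq_childCell01 h)

theorem PupRC_12_inter_02 (n : ℕ) :
    PupRC (2 * n + 1) 1 2 ∩ PupRC (2 * n + 1) 0 2 = {blankUp} := by
  refine subset_antisymm (fun p hp => ?_) (Set.singleton_subset_iff.2
    ⟨blankUp_mem_PupRC (ε := 1) (by omega) (by omega),
      blankUp_mem_PupRC (ε := 1) (by omega) (by omega)⟩)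
  obtain ⟨u, b, _, _, rfl, h⟩ := exists_childCell_eq_of_mem_inter (ε := 1) (ε' := 1) hp
  exact upPattern_two_mul_add_eq_blankUp le_rfl le_rfl (eq_false_of_childCell11_eq_childCell01 h)

theorem sierpinski_up_intersections_odd_general (n : ℕ) :
    PupRC (2 * n + 1) 0 0 ∩ PupRC (2 * n + 1) 1 0 = {blankUp, botrightUp (2 * n + 1)} ∧
    PupRC (2 * n + 1) 0 0 ∩ PupRC (2 * n + 1) 1 2 = {blankUp, botleftUp (2 * n + 1)} ∧
    PupRC (2 * n + 1) 0 0 ∩ PupRC (2 * n + 1) 0 2 = {blankUp} ∧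
    PupRC (2 * n + 1) 1 0 ∩ PupRC (2 * n + 1) 1 2 = {blankUp, topUp} ∧
    PupRC (2 * n + 1) 1 0 ∩ PupRC (2 * n + 1) 0 2 = {blankUp} ∧
    PupRC (2 * n + 1) 1 2 ∩ PupRC (2 * n + 1) 0 2 = {blankUp} :=
  ⟨PupRC_00_inter_10 n, PupRC_00_inter_12 n, PupRC_00_inter_02 n, PupRC_10_inter_12 n,
    PupRC_10_inter_02 n, PupRC_12_inter_02 n⟩

theorem sierpinski_up_intersections_odd (n : ℕ) (hn : 1 ≤ n) :
    PupRC (2 * n + 1) 0 0 ∩ PupRC (2 * n + 1) 1 0 = {blankUp, botrightUp (2 * n + 1)} ∧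
    PupRC (2 * n + 1) 0 0 ∩ PupRC (2 * n + 1) 1 2 = {blankUp, botleftUp (2 * n + 1)} ∧
    PupRC (2 * n + 1) 0 0 ∩ PupRC (2 * n + 1) 0 2 = {blankUp} ∧
    PupRC (2 * n + 1) 1 0 ∩ PupRC (2 * n + 1) 1 2 = {blankUp, topUp} ∧
    PupRC (2 * n + 1) 1 0 ∩ PupRC (2 * n + 1) 0 2 = {blankUp} ∧
    PupRC (2 * n + 1) 1 2 ∩ PupRC (2 * n + 1) 0 2 = {blankUp} :=
  sierpinski_up_intersections_odd_general n
end

section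
/- Let n ≥ 2 and set N = 2n+1. Then: P_down^{(0,1)}(N) ∩ P_down^{(1,3)}(N) = {blank'_N}; P_down^{(0,1)}(N) ∩ P_down^{(1,1)}(N) = {blank'_N, rightside_N}; P_down^{(0,1)}(N) ∩ P_down^{(0,3)}(N) = {blank'_N}; P_down^{(1,3)}(N) ∩ P_down^{(1,1)}(N) = {blank'_N, topside_N}; P_down^{(1,3)}(N) ∩ P_down^{(0,3)}(N) = {blank'_N}; and P_down^{(1,1)}(N) ∩ P_down^{(0,3)}(N) = {blank'_N, leftside_N}. -/
lemma lucas2 (s j a b : ℕ) (ha : a < 2) (hb : b < 2) :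
    Nat.choose (2*s+a) (2*j+b) % 2 = (Nat.choose a b * Nat.choose s j) % 2 := by
  have := @Choose.choose_modEq_choose_mod_mul_choose_div_nat (2*s+a) (2*j+b) 2 ⟨Nat.prime_two⟩
  unfold Nat.ModEq at this
  rw [this]
  have h1 : (2*s+a) % 2 = a := by omega
  have h2 : (2*s+a) / 2 = s := by omega
  have h3 : (2*j+b) % 2 = b := by omega
  have h4 : (2*j+b) / 2 = j := by omega
  rw [h1,h2,h3,h4]

lemma c00 (s j : ℕ) : Nat.choose (2*s) (2*j) % 2 = Nat.choose s j % 2 := by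
  have := lucas2 s j 0 0 (by omega) (by omega); simpa using this

lemma c01 (s j : ℕ) : Nat.choose (2*s) (2*j+1) % 2 = 0 := by
  have := lucas2 s j 0 1 (by omega) (by omega); simpa using this

lemma c10 (s j : ℕ) : Nat.choose (2*s+1) (2*j) % 2 = Nat.choose s j % 2 := by
  have := lucas2 s j 1 0 (by omega) (by omega); simpa using this

lemma c11 (s j : ℕ) : Nat.choose (2*s+1) (2*j+1) % 2 = Nat.choose s j % 2 := by
  have := lucas2 s j 1 1 (by omega) (by omega); simpa using this

-- filled-level facts
lemma filled_odd_col (r c : ℕ) (h : c % 2 = 1) : filled r c = false := by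
  simp [filled]; omega

/-- (A): even row, column ≡ 2 mod 4 is unfilled. -/
lemma factA (R C : ℕ) (hR : R % 2 = 0) (hC : C % 4 = 2) : filled R C = false := by
  obtain ⟨s, rfl⟩ : ∃ s, R = 2*s := ⟨R/2, by omega⟩
  obtain ⟨j, rfl⟩ : ∃ j, C = 2*(2*j+1) := ⟨C/4, by omega⟩
  simp [filled, Nat.mul_div_cancel_left]
  exact c01 s j

/-- (B): odd row, columns 4j and 4j+2 agree. -/
lemma factB (R C : ℕ) (hR : R % 2 = 1) (hC : C % 4 = 0) : filled R C = filled R (C+2) := by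
  obtain ⟨s, rfl⟩ : ∃ s, R = 2*s+1 := ⟨R/2, by omega⟩
  obtain ⟨j, rfl⟩ : ∃ j, C = 2*(2*j) := ⟨C/4, by omega⟩
  have h2 : 2*(2*j)+2 = 2*(2*j+1) := by ring
  rw [h2]
  simp [filled, Nat.mul_div_cancel_left]
  rw [c10 s j, c11 s j]


/-- (C): rows 2s and 2s+1 agree at columns ≡ 0 mod 4. -/
lemma factC (R C : ℕ) (hR : R % 2 = 0) (hC : C % 4 = 0) : filled R C = filled (R+1) C := by
  obtain ⟨s, rfl⟩ : ∃ s, R = 2*s := ⟨R/2, by omega⟩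
  obtain ⟨j, rfl⟩ : ∃ j, C = 2*(2*j) := ⟨C/4, by omega⟩
  simp [filled, Nat.mul_div_cancel_left]
  rw [c00 s j, c10 s j]

/-- (D): filled (2s) (4j) = filled (2s+1) (4j+2). -/
lemma factD (R C : ℕ) (hR : R % 2 = 0) (hC : C % 4 = 0) : filled R C = filled (R+1) (C+2) := by
  rw [factC R C hR hC, factB (R+1) C (by omega) hC]

lemma F1 : ∀ K t j : ℕ, t < j → j < 2^K → Nat.choose (2^K + t) j % 2 = 0 := by
  intro K
  induction K with
  | zero => intro t j h1 h2; simp at h2; omega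
  | succ K ih =>
    intro t j h1 h2
    have hp : (2:ℕ)^(K+1) = 2*2^K := by rw [pow_succ]; ring
    obtain ⟨t', a, ha, rfl⟩ : ∃ t' a, a < 2 ∧ t = 2*t'+a := ⟨t/2, t%2, by omega, by omega⟩
    obtain ⟨j', b, hb, rfl⟩ : ∃ j' b, b < 2 ∧ j = 2*j'+b := ⟨j/2, j%2, by omega, by omega⟩
    have hpow : 2^(K+1) + (2*t'+a) = 2*(2^K + t') + a := by rw [hp]; ring
    rw [hpow, lucas2 _ _ _ _ ha hb]
    rcases Nat.lt_or_ge a b with h | h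
    · have h0 : a = 0 ∧ b = 1 := by omega
      simp [h0.1, h0.2]
    · have h3 : t' < j' := by omega
      have h4 : j' < 2^K := by omega
      rw [Nat.mul_mod, ih t' j' h3 h4]; simp

lemma F2 : ∀ K t : ℕ, t < 2^K → Nat.choose (2^K + t) (2^K) % 2 = 1 := by
  intro K
  induction K with
  | zero => intro t h; interval_cases t; rfl
  | succ K ih =>
    intro t h
    have hp : (2:ℕ)^(K+1) = 2*2^K := by rw [pow_succ]; ring
    obtain ⟨t', a, ha, rfl⟩ : ∃ t' a, a < 2 ∧ t = 2*t'+a := ⟨t/2, t%2, by omega, by omega⟩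
    have hpow : 2^(K+1) + (2*t'+a) = 2*(2^K + t') + a := by rw [hp]; ring
    have hpow2 : (2:ℕ)^(K+1) = 2*(2^K)+0 := by omega
    rw [hpow, hpow2, lucas2 _ _ _ _ ha (by omega)]
    have h4 : t' < 2^K := by omega
    rw [Nat.mul_mod, ih t' h4, Nat.choose_zero_right]

lemma F3 : ∀ K t : ℕ, t < 2^K → Nat.choose (2^K + t) t % 2 = 1 := by
  intro K
  induction K with
  | zero => intro t h; interval_cases t; rfl
  | succ K ih =>
    intro t h
    have hp : (2:ℕ)^(K+1) = 2*2^K := by rw [pow_succ]; ring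
    obtain ⟨t', a, ha, rfl⟩ : ∃ t' a, a < 2 ∧ t = 2*t'+a := ⟨t/2, t%2, by omega, by omega⟩
    have hpow : 2^(K+1) + (2*t'+a) = 2*(2^K + t') + a := by rw [hp]; ring
    rw [hpow, lucas2 _ _ _ _ ha ha]
    have h4 : t' < 2^K := by omega
    rw [Nat.mul_mod, ih t' h4, Nat.choose_self]

lemma F4 : ∀ K j : ℕ, j < 2^K → Nat.choose (2^K - 1) j % 2 = 1 := by
  intro K
  induction K with
  | zero => intro j h; interval_cases j; rfl
  | succ K ih =>
    intro j h
    have hp : (2:ℕ)^(K+1) = 2*2^K := by rw [pow_succ]; ring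
    have hp2 : (1:ℕ) ≤ 2^K := Nat.one_le_two_pow
    obtain ⟨j', b, hb, rfl⟩ : ∃ j' b, b < 2 ∧ j = 2*j'+b := ⟨j/2, j%2, by omega, by omega⟩
    have hpow : 2^(K+1) - 1 = 2*(2^K - 1) + 1 := by omega
    rw [hpow, lucas2 _ _ _ _ (by omega) hb]
    have h4 : j' < 2^K := by omega
    rw [Nat.mul_mod, ih j' h4]
    interval_cases b <;> simp

lemma dp_eq {N r c k m : ℕ} (h1 : k < N) (h2 : m ≤ 2*(N-1-k)) :
    downPattern N r c (k,m) = filled (r+k) (c+2*k+m) := by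
  simp [downPattern, h1, h2]

lemma dp_dom {N r c k m : ℕ} (h : downPattern N r c (k,m) = true) :
    k < N ∧ m ≤ 2*(N-1-k) := by
  by_contra hc
  rw [downPattern, if_neg hc] at h
  exact Bool.false_ne_true h

lemma S0 {N r c k m : ℕ} (hc : c % 2 = 1) (hm : m % 2 = 0) :
    downPattern N r c (k,m) = false := by
  by_cases h : k < N ∧ m ≤ 2*(N-1-k)
  · rw [dp_eq h.1 h.2]; exact filled_odd_col _ _ (by omega)
  · rw [downPattern.eq_def]; exact if_neg h

lemma S1 {N r c k m : ℕ} (hr : (r+k) % 2 = 0) (hcol : (c+2*k+m) % 4 = 2) :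
    downPattern N r c (k,m) = false := by
  by_cases h : k < N ∧ m ≤ 2*(N-1-k)
  · rw [dp_eq h.1 h.2]; exact factA _ _ hr hcol
  · rw [downPattern.eq_def]; exact if_neg h

lemma S2 {N r c k m : ℕ} (h1 : k < N) (h2 : m+2 ≤ 2*(N-1-k))
    (hr : (r+k) % 2 = 1) (hcol : (c+2*k+m) % 4 = 0) :
    downPattern N r c (k,m) = downPattern N r c (k,m+2) := by
  rw [dp_eq h1 (by omega), dp_eq h1 h2]
  have : c+2*k+(m+2) = (c+2*k+m)+2 := by ring
  rw [this]
  exact factB _ _ hr hcol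

lemma S3 {N r c k m : ℕ} (h0 : 1 ≤ k) (h1 : k < N) (h2 : m ≤ 2*(N-1-k))
    (hr : (r+k) % 2 = 1) (hcol : (c+2*k+m) % 4 = 0) :
    downPattern N r c (k-1,m+2) = downPattern N r c (k,m) := by
  rw [dp_eq (by omega) (by omega), dp_eq h1 h2]
  have e1 : c+2*(k-1)+(m+2) = c+2*k+m := by omega
  have e2 : r+(k-1)+1 = r+k := by omega
  rw [e1, ← e2, ← factC _ _ (by omega) hcol]

lemma S5 {N r c k m : ℕ} (h1 : k+1 < N) (h2 : 2 ≤ m) (h3 : m ≤ 2*(N-1-k))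
    (hr : (r+k) % 2 = 0) (hcol : (c+2*k+m) % 4 = 0) :
    downPattern N r c (k,m) = downPattern N r c (k+1,m-2) := by
  rw [dp_eq (by omega) h3, dp_eq h1 (by omega)]
  have e1 : c+2*(k+1)+(m-2) = c+2*k+m := by omega
  have e2 : r+(k+1) = (r+k)+1 := by ring
  rw [e1, e2]
  exact factC _ _ hr hcol

lemma S4 {N r c k : ℕ} (h1 : k+2 < N)
    (hr : (r+k) % 2 = 0) (hcol : (c+2*k+1) % 4 = 0) :
    downPattern N r c (k,1) = downPattern N r c (k+1,1) := by
  rw [dp_eq (by omega) (by omega), dp_eq (by omega) (by omega)]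
  have e1 : c+2*(k+1)+1 = (c+2*k+1)+2 := by ring
  have e2 : r+(k+1) = (r+k)+1 := by ring
  rw [e1, e2]
  exact factD _ _ hr hcol

lemma dp_transfer {N r c r' c' : ℕ} {q : ℕ × ℕ}
    (hE : downPattern N r c = downPattern N r' c') (h : downPattern N r c q = true) :
    downPattern N r' c' q = true := by rw [← hE]; exact h

lemma classA (n r c r' c' : ℕ)
    (hc : c%2=1) (hc' : c'%2=1) (hr : r%2=0) (hg : c%4=1) (hr' : r'%2=1) (hg' : c'%4=3)
    (hE : downPattern (2*n+1) r c = downPattern (2*n+1) r' c') :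
    ∀ q, downPattern (2*n+1) r c q = false := by
  set N := 2*n+1 with hN
  have key : ∀ k m, downPattern N r c (k,m) = true → m % 4 = 3 := by
    intro k m h
    have hm2 : m % 2 = 1 := by
      by_contra h2
      rw [S0 hc (by omega)] at h; exact Bool.false_ne_true h
    by_contra hm4
    have hm1 : m % 4 = 1 := by omega
    rcases Nat.mod_two_eq_zero_or_one k with hk|hk
    · rw [S1 (r:=r) (by omega) (by omega)] at h; exact Bool.false_ne_true h
    · have h' := dp_transfer hE h
      rw [S1 (r:=r') (by omega) (by omega)] at h'; exact Bool.false_ne_true h'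
  have main : ∀ k m, downPattern N r c (k,m) ≠ true := by
    intro k m h
    have hm := key k m h
    have hd := dp_dom h
    have e : m - 2 + 2 = m := by omega
    rcases Nat.mod_two_eq_zero_or_one k with hk|hk
    · have h' := dp_transfer hE h
      have hS := S2 (r:=r') (c:=c') (k:=k) (m:=m-2) hd.1 (by omega) (by omega) (by omega)
      rw [e] at hS
      have h3 : downPattern N r c (k,m-2) = true := by rw [hE, hS]; exact h'
      have := key k (m-2) h3; omega
    · have hS := S2 (r:=r) (c:=c) (k:=k) (m:=m-2) hd.1 (by omega) (by omega) (by omega)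
      rw [e] at hS
      have h3 : downPattern N r c (k,m-2) = true := by rw [hS]; exact h
      have := key k (m-2) h3; omega
  rintro ⟨k,m⟩
  rcases Bool.eq_false_or_eq_true (downPattern N r c (k,m)) with h|h
  · exact absurd h (main k m)
  · exact h

lemma classC (n r c r' c' : ℕ)
    (hc : c%2=1) (hc' : c'%2=1) (hr : r%2=0) (hg : c%4=1) (hr' : r'%2=0) (hg' : c'%4=3)
    (hE : downPattern (2*n+1) r c = downPattern (2*n+1) r' c') :
    ∀ q, downPattern (2*n+1) r c q = false := by
  set N := 2*n+1 with hN
  have evenFalse : ∀ k m, k % 2 = 0 → downPattern N r c (k,m) ≠ true := by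
    intro k m hk h
    have hm2 : m % 2 = 1 := by
      by_contra h2; rw [S0 hc (by omega)] at h; exact Bool.false_ne_true h
    rcases Nat.lt_or_ge (m % 4) 2 with hm4|hm4
    · rw [S1 (r:=r) (by omega) (by omega)] at h; exact Bool.false_ne_true h
    · have h' := dp_transfer hE h
      rw [S1 (r:=r') (by omega) (by omega)] at h'; exact Bool.false_ne_true h'
  have main : ∀ k m, downPattern N r c (k,m) ≠ true := by
    intro k m h
    rcases Nat.mod_two_eq_zero_or_one k with hk|hk
    · exact evenFalse k m hk h
    have hm2 : m % 2 = 1 := by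
      by_contra h2; rw [S0 hc (by omega)] at h; exact Bool.false_ne_true h
    have hd := dp_dom h
    rcases Nat.lt_or_ge (m % 4) 2 with hm4|hm4
    · have hS := S3 (r:=r) (c:=c) (by omega) hd.1 hd.2 (by omega) (by omega)
      rw [h] at hS
      exact evenFalse (k-1) (m+2) (by omega) hS
    · have h' := dp_transfer hE h
      have hS := S3 (r:=r') (c:=c') (by omega) hd.1 hd.2 (by omega) (by omega)
      rw [h'] at hS
      have h3 : downPattern N r c (k-1,m+2) = true := by rw [hE]; exact hS
      exact evenFalse (k-1) (m+2) (by omega) h3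
  rintro ⟨k,m⟩
  rcases Bool.eq_false_or_eq_true (downPattern N r c (k,m)) with h|h
  · exact absurd h (main k m)
  · exact h

lemma classE (n r c r' c' : ℕ)
    (hc : c%2=1) (hc' : c'%2=1) (hr : r%2=1) (hg : c%4=3) (hr' : r'%2=0) (hg' : c'%4=3)
    (hE : downPattern (2*n+1) r c = downPattern (2*n+1) r' c') :
    ∀ q, downPattern (2*n+1) r c q = false := by
  set N := 2*n+1 with hN
  have key : ∀ k m, downPattern N r c (k,m) = true →
      m % 2 = 1 ∧ (k % 2 = 1 → m % 4 = 3) ∧ (k % 2 = 0 → m % 4 = 1) := by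
    intro k m h
    have hm2 : m % 2 = 1 := by
      by_contra h2; rw [S0 hc (by omega)] at h; exact Bool.false_ne_true h
    refine ⟨hm2, ?_, ?_⟩
    · intro hk
      by_contra hm4
      rw [S1 (r:=r) (by omega) (by omega)] at h; exact Bool.false_ne_true h
    · intro hk
      by_contra hm4
      have h' := dp_transfer hE h
      rw [S1 (r:=r') (by omega) (by omega)] at h'; exact Bool.false_ne_true h'
  have evenFalse : ∀ k m, k % 2 = 0 → downPattern N r c (k,m) ≠ true := by
    intro k m hk h
    have hm := (key k m h).2.2 hk
    have hd := dp_dom h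
    rcases Nat.lt_or_ge (m+2) (2*(N-1-k)+1) with hb|hb
    · have hS := S2 (r:=r) (c:=c) (k:=k) (m:=m) hd.1 (by omega) (by omega) (by omega)
      rw [h] at hS
      have := (key k (m+2) hS.symm).2.2 hk; omega
    · omega
  have main : ∀ k m, downPattern N r c (k,m) ≠ true := by
    intro k m h
    rcases Nat.mod_two_eq_zero_or_one k with hk|hk
    · exact evenFalse k m hk h
    have hm := (key k m h).2.1 hk
    have hd := dp_dom h
    have h' := dp_transfer hE h
    have hS := S3 (r:=r') (c:=c') (by omega) hd.1 hd.2 (by omega) (by omega)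
    rw [h'] at hS
    have h3 : downPattern N r c (k-1,m+2) = true := by rw [hE]; exact hS
    exact evenFalse (k-1) (m+2) (by omega) h3
  rintro ⟨k,m⟩
  rcases Bool.eq_false_or_eq_true (downPattern N r c (k,m)) with h|h
  · exact absurd h (main k m)
  · exact h

lemma classB (n r c r' c' : ℕ) (hn : 2 ≤ n)
    (hc : c%2=1) (hc' : c'%2=1) (hr : r%2=0) (hg : c%4=1) (hr' : r'%2=1) (hg' : c'%4=1)
    (hE : downPattern (2*n+1) r c = downPattern (2*n+1) r' c') :
    downPattern (2*n+1) r c = blankDown ∨ downPattern (2*n+1) r c = rightsideDown (2*n+1) := by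
  set N := 2*n+1 with hN
  have key : ∀ k m, downPattern N r c (k,m) = true →
      m % 2 = 1 ∧ (k % 2 = 0 → m % 4 = 3) ∧ (k % 2 = 1 → m % 4 = 1) := by
    intro k m h
    have hm2 : m % 2 = 1 := by
      by_contra h2; rw [S0 hc (by omega)] at h; exact Bool.false_ne_true h
    refine ⟨hm2, ?_, ?_⟩
    · intro hk
      by_contra hm4
      rw [S1 (r:=r) (by omega) (by omega)] at h; exact Bool.false_ne_true h
    · intro hk
      by_contra hm4
      have h' := dp_transfer hE h
      rw [S1 (r:=r') (by omega) (by omega)] at h'; exact Bool.false_ne_true h'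
  have edge : ∀ k m, downPattern N r c (k,m) = true →
      m = 2*(N-1-k)-1 ∧ k ≤ N-2 := by
    intro k m h
    have hm := key k m h
    have hd := dp_dom h
    rcases Nat.lt_or_ge (m+2) (2*(N-1-k)+1) with hb|hb
    · rcases Nat.mod_two_eq_zero_or_one k with hk|hk
      · have h' := dp_transfer hE h
        have hS := S2 (r:=r') (c:=c') (k:=k) (m:=m) hd.1 (by omega) (by omega)
          (by have := hm.2.1 hk; omega)
        rw [h'] at hS
        have h3 : downPattern N r c (k,m+2) = true := by rw [hE]; exact hS.symm
        have := (key k (m+2) h3).2.1 hk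
        have := hm.2.1 hk; omega
      · have hS := S2 (r:=r) (c:=c) (k:=k) (m:=m) hd.1 (by omega) (by omega)
          (by have := hm.2.2 hk; omega)
        rw [h] at hS
        have := (key k (m+2) hS.symm).2.2 hk
        have := hm.2.2 hk; omega
    · constructor <;> omega
  have step : ∀ k, k+1 ≤ N-2 →
      downPattern N r c (k, 2*(N-1-k)-1) = downPattern N r c (k+1, 2*(N-1-(k+1))-1) := by
    intro k hk
    have e2 : 2*(N-1-k)-1-2 = 2*(N-1-(k+1))-1 := by omega
    have hb1 : k+1 < N := by omega
    have hb2 : 2 ≤ 2*(N-1-k)-1 := by omega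
    have hb3 : 2*(N-1-k)-1 ≤ 2*(N-1-k) := by omega
    have hcol1 : (c+2*k+(2*(N-1-k)-1)) % 4 = 0 := by omega
    have hcol2 : (c'+2*k+(2*(N-1-k)-1)) % 4 = 0 := by omega
    rcases Nat.mod_two_eq_zero_or_one k with hpk|hpk
    · have hS := S5 (r:=r) (c:=c) hb1 hb2 hb3 (by omega) hcol1
      rw [e2] at hS; exact hS
    · have hS := S5 (r:=r') (c:=c') hb1 hb2 hb3 (by omega) hcol2
      rw [e2] at hS
      calc downPattern N r c (k, 2*(N-1-k)-1)
          = downPattern N r' c' (k, 2*(N-1-k)-1) := by rw [hE]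
        _ = downPattern N r' c' (k+1, 2*(N-1-(k+1))-1) := hS
        _ = downPattern N r c (k+1, 2*(N-1-(k+1))-1) := by rw [hE]
  have chain : ∀ k, k ≤ N-2 →
      downPattern N r c (k, 2*(N-1-k)-1) = downPattern N r c (0, 2*(N-1)-1) := by
    intro k
    induction k with
    | zero => intro _; norm_num
    | succ k ih => intro hk; rw [← step k (by omega), ih (by omega)]
  rcases Bool.eq_false_or_eq_true (downPattern N r c (0, 2*(N-1)-1)) with hv|hv
  · right
    funext q; obtain ⟨k,m⟩ := q
    by_cases hq : k ≤ N-2 ∧ m = 2*(N-1-k)-1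
    · have h1 : rightsideDown N (k,m) = true := by
        simp only [rightsideDown]; exact decide_eq_true hq
      rw [h1, hq.2, chain k hq.1]; exact hv
    · have h1 : rightsideDown N (k,m) = false := by
        simp only [rightsideDown]; exact decide_eq_false hq
      rw [h1]
      rcases Bool.eq_false_or_eq_true (downPattern N r c (k,m)) with h|h
      · exact (hq ⟨(edge k m h).2, (edge k m h).1⟩).elim
      · exact h
  · left
    funext q; obtain ⟨k,m⟩ := q
    rcases Bool.eq_false_or_eq_true (downPattern N r c (k,m)) with h|h
    · have he := edge k m h
      rw [he.1] at h
      rw [chain k he.2] at h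
      rw [hv] at h
      exact absurd h Bool.false_ne_true
    · exact h

lemma classD (n r c r' c' : ℕ) (hn : 2 ≤ n)
    (hc : c%2=1) (hc' : c'%2=1) (hr : r%2=1) (hg : c%4=3) (hr' : r'%2=1) (hg' : c'%4=1)
    (hE : downPattern (2*n+1) r c = downPattern (2*n+1) r' c') :
    downPattern (2*n+1) r c = blankDown ∨ downPattern (2*n+1) r c = topsideDown (2*n+1) := by
  set N := 2*n+1 with hN
  have oddFalse : ∀ k m, k % 2 = 1 → downPattern N r c (k,m) ≠ true := by
    intro k m hk h
    have hm2 : m % 2 = 1 := by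
      by_contra h2; rw [S0 hc (by omega)] at h; exact Bool.false_ne_true h
    rcases Nat.lt_or_ge (m % 4) 2 with hm4|hm4
    · rw [S1 (r:=r) (by omega) (by omega)] at h; exact Bool.false_ne_true h
    · have h' := dp_transfer hE h
      rw [S1 (r:=r') (by omega) (by omega)] at h'; exact Bool.false_ne_true h'
  have key : ∀ k m, downPattern N r c (k,m) = true →
      k = 0 ∧ m % 2 = 1 ∧ 1 ≤ m ∧ m ≤ 2*N-3 := by
    intro k m h
    have hm2 : m % 2 = 1 := by
      by_contra h2; rw [S0 hc (by omega)] at h; exact Bool.false_ne_true h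
    have hd := dp_dom h
    have hk0 : k = 0 := by
      rcases Nat.mod_two_eq_zero_or_one k with hk|hk
      · by_contra hk1
        rcases Nat.lt_or_ge (m % 4) 2 with hm4|hm4
        · have hS := S3 (r:=r) (c:=c) (by omega) hd.1 hd.2 (by omega) (by omega)
          rw [h] at hS
          exact oddFalse (k-1) (m+2) (by omega) hS
        · have h' := dp_transfer hE h
          have hS := S3 (r:=r') (c:=c') (by omega) hd.1 hd.2 (by omega) (by omega)
          rw [h'] at hS
          have h3 : downPattern N r c (k-1,m+2) = true := by rw [hE]; exact hS
          exact oddFalse (k-1) (m+2) (by omega) h3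
      · exact absurd h (oddFalse k m hk)
    subst hk0
    refine ⟨rfl, hm2, by omega, by omega⟩
  have step : ∀ i, 2*i+3 ≤ 2*(N-1) →
      downPattern N r c (0, 2*i+1) = downPattern N r c (0, 2*i+3) := by
    intro i hi
    have hd1 : (0:ℕ) < N := by omega
    have hd2 : 2*i+1+2 ≤ 2*(N-1-0) := by omega
    rcases Nat.lt_or_ge ((2*i+1) % 4) 2 with hm4|hm4
    · have hS := S2 (r:=r) (c:=c) (k:=0) (m:=2*i+1) hd1 hd2 (by omega) (by omega)
      simpa using hS
    · have hS := S2 (r:=r') (c:=c') (k:=0) (m:=2*i+1) hd1 hd2 (by omega) (by omega)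
      calc downPattern N r c (0, 2*i+1)
          = downPattern N r' c' (0, 2*i+1) := by rw [hE]
        _ = downPattern N r' c' (0, 2*i+1+2) := hS
        _ = downPattern N r c (0, 2*i+3) := by rw [hE]
  have chain : ∀ i, 2*i+1 ≤ 2*N-3 →
      downPattern N r c (0, 2*i+1) = downPattern N r c (0, 1) := by
    intro i
    induction i with
    | zero => intro _; rfl
    | succ i ih =>
      intro hi
      have : 2*(i+1)+1 = 2*i+3 := by ring
      rw [this, ← step i (by omega), ih (by omega)]
  rcases Bool.eq_false_or_eq_true (downPattern N r c (0, 1)) with hv|hv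
  · right
    funext q; obtain ⟨k,m⟩ := q
    by_cases hq : k = 0 ∧ m % 2 = 1 ∧ 1 ≤ m ∧ m ≤ 2*N-3
    · have h1 : topsideDown N (k,m) = true := by
        simp only [topsideDown]; exact decide_eq_true hq
      obtain ⟨i, hi⟩ : ∃ i, m = 2*i+1 := ⟨m/2, by omega⟩
      rw [h1, hq.1, hi, chain i (by omega)]; exact hv
    · have h1 : topsideDown N (k,m) = false := by
        simp only [topsideDown]; exact decide_eq_false hq
      rw [h1]
      rcases Bool.eq_false_or_eq_true (downPattern N r c (k,m)) with h|h
      · exact (hq (key k m h)).elim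
      · exact h
  · left
    funext q; obtain ⟨k,m⟩ := q
    rcases Bool.eq_false_or_eq_true (downPattern N r c (k,m)) with h|h
    · obtain ⟨hk0, hm2, hm1, hm3⟩ := key k m h
      subst hk0
      obtain ⟨i, hi⟩ : ∃ i, m = 2*i+1 := ⟨m/2, by omega⟩
      rw [hi, chain i (by omega), hv] at h
      exact absurd h Bool.false_ne_true
    · exact h

lemma classF (n r c r' c' : ℕ) (hn : 2 ≤ n)
    (hc : c%2=1) (hc' : c'%2=1) (hr : r%2=1) (hg : c%4=1) (hr' : r'%2=0) (hg' : c'%4=3)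
    (hE : downPattern (2*n+1) r c = downPattern (2*n+1) r' c') :
    downPattern (2*n+1) r c = blankDown ∨ downPattern (2*n+1) r c = leftsideDown (2*n+1) := by
  set N := 2*n+1 with hN
  have key1 : ∀ k m, downPattern N r c (k,m) = true → m % 4 = 1 := by
    intro k m h
    have hm2 : m % 2 = 1 := by
      by_contra h2; rw [S0 hc (by omega)] at h; exact Bool.false_ne_true h
    by_contra hm4
    rcases Nat.mod_two_eq_zero_or_one k with hk|hk
    · have h' := dp_transfer hE h
      rw [S1 (r:=r') (by omega) (by omega)] at h'; exact Bool.false_ne_true h'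
    · rw [S1 (r:=r) (by omega) (by omega)] at h; exact Bool.false_ne_true h
  have key : ∀ k m, downPattern N r c (k,m) = true → m = 1 ∧ k ≤ N-2 := by
    intro k m h
    have hm := key1 k m h
    have hd := dp_dom h
    have hm1 : m = 1 := by
      by_contra hm5
      have e : m - 2 + 2 = m := by omega
      rcases Nat.mod_two_eq_zero_or_one k with hk|hk
      · have hS := S2 (r:=r) (c:=c) (k:=k) (m:=m-2) hd.1 (by omega) (by omega) (by omega)
        rw [e] at hS
        have h3 : downPattern N r c (k,m-2) = true := by rw [hS]; exact h
        have := key1 k (m-2) h3; omega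
      · have h' := dp_transfer hE h
        have hS := S2 (r:=r') (c:=c') (k:=k) (m:=m-2) hd.1 (by omega) (by omega) (by omega)
        rw [e] at hS
        have h3 : downPattern N r c (k,m-2) = true := by rw [hE, hS]; exact h'
        have := key1 k (m-2) h3; omega
    subst hm1
    exact ⟨rfl, by omega⟩
  have step : ∀ k, k+1 ≤ N-2 →
      downPattern N r c (k, 1) = downPattern N r c (k+1, 1) := by
    intro k hk
    have hb1 : k+2 < N := by omega
    rcases Nat.mod_two_eq_zero_or_one k with hpk|hpk
    · have hS := S4 (r:=r') (c:=c') hb1 (by omega) (by omega)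
      calc downPattern N r c (k, 1) = downPattern N r' c' (k, 1) := by rw [hE]
        _ = downPattern N r' c' (k+1, 1) := hS
        _ = downPattern N r c (k+1, 1) := by rw [hE]
    · exact S4 (r:=r) (c:=c) hb1 (by omega) (by omega)
  have chain : ∀ k, k ≤ N-2 → downPattern N r c (k, 1) = downPattern N r c (0, 1) := by
    intro k
    induction k with
    | zero => intro _; rfl
    | succ k ih => intro hk; rw [← step k (by omega), ih (by omega)]
  rcases Bool.eq_false_or_eq_true (downPattern N r c (0, 1)) with hv|hv
  · right
    funext q; obtain ⟨k,m⟩ := q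
    by_cases hq : m = 1 ∧ k ≤ N-2
    · have h1 : leftsideDown N (k,m) = true := by
        simp only [leftsideDown]; exact decide_eq_true hq
      rw [h1, hq.1, chain k hq.2]; exact hv
    · have h1 : leftsideDown N (k,m) = false := by
        simp only [leftsideDown]; exact decide_eq_false hq
      rw [h1]
      rcases Bool.eq_false_or_eq_true (downPattern N r c (k,m)) with h|h
      · exact (hq (key k m h)).elim
      · exact h
  · left
    funext q; obtain ⟨k,m⟩ := q
    rcases Bool.eq_false_or_eq_true (downPattern N r c (k,m)) with h|h
    · obtain ⟨hm1, hk2⟩ := key k m h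
      subst hm1
      rw [chain k hk2, hv] at h
      exact absurd h Bool.false_ne_true
    · exact h

lemma filled_false_of_choose {R C : ℕ} (h : Nat.choose R (C/2) % 2 = 0) :
    filled R C = false := by
  simp [filled]; intro _; omega

lemma filled_true_of_choose {R C : ℕ} (h2 : C % 2 = 0) (h : Nat.choose R (C/2) % 2 = 1) :
    filled R C = true := by
  simp [filled]; exact ⟨h2, h⟩

lemma powfact : ∀ n : ℕ, 2 ≤ n → ∃ M : ℕ, 2^(2*n+1) = 4*M ∧ n+2 ≤ M := by
  intro n hn
  induction n with
  | zero => omega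
  | succ n ih =>
    rcases Nat.lt_or_ge n 2 with h|h
    · have hn1 : n = 1 := by omega
      subst hn1
      exact ⟨8, by norm_num, by omega⟩
    · obtain ⟨M, h1, h2⟩ := ih h
      refine ⟨4*M, ?_, by omega⟩
      have e : 2*(n+1)+1 = (2*n+1)+2 := by ring
      rw [e, pow_add, h1]; ring

lemma blank_wit (n t c : ℕ) (hn : 2 ≤ n) (ht : t ≤ 1) (hc : c % 2 = 1)
    (hct : 2*t+1 ≤ c) (hc5 : c ≤ 5) :
    downPattern (2*n+1) (2^(2*n+1)+t) c = blankDown := by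
  obtain ⟨M, hM1, hM2⟩ := powfact n hn
  funext q; obtain ⟨k,m⟩ := q
  show _ = false
  by_cases hd : k < 2*n+1 ∧ m ≤ 2*(2*n+1-1-k)
  · rw [dp_eq hd.1 hd.2]
    rcases Nat.mod_two_eq_zero_or_one m with hm|hm
    · exact filled_odd_col _ _ (by omega)
    · apply filled_false_of_choose
      rw [show 2^(2*n+1)+t+k = 2^(2*n+1)+(t+k) from by omega]
      exact F1 _ _ _ (by omega) (by omega)
  · rw [downPattern.eq_def]; exact if_neg hd

lemma right_wit (n t : ℕ) (hn : 2 ≤ n) (ht : 1 ≤ t) (ht2 : t ≤ 2) :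
    downPattern (2*n+1) (2^(2*n+1)+t) (2^(2*n+2) - (4*n-1)) = rightsideDown (2*n+1) := by
  obtain ⟨M, hM1, hM2⟩ := powfact n hn
  have hP : (2:ℕ)^(2*n+2) = 2*2^(2*n+1) := by rw [pow_succ]; ring
  funext q; obtain ⟨k,m⟩ := q
  by_cases hd : k < 2*n+1 ∧ m ≤ 2*(2*n+1-1-k)
  · rw [dp_eq hd.1 hd.2]
    rcases Nat.mod_two_eq_zero_or_one m with hm|hm
    · rw [filled_odd_col _ _ (by omega)]
      symm; simp only [rightsideDown]; exact decide_eq_false (by omega)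
    · by_cases hq : k ≤ 2*n+1-2 ∧ m = 2*(2*n+1-1-k)-1
      · rw [filled_true_of_choose (by omega)
          (by rw [show (2^(2*n+2)-(4*n-1)+2*k+m)/2 = 2^(2*n+1) from by omega,
                show 2^(2*n+1)+t+k = 2^(2*n+1)+(t+k) from by omega]
              exact F2 _ _ (by omega))]
        symm; simp only [rightsideDown]; exact decide_eq_true hq
      · rw [filled_false_of_choose
          (by rw [show 2^(2*n+1)+t+k = 2^(2*n+1)+(t+k) from by omega]
              exact F1 _ _ _ (by omega) (by omega))]
        symm; simp only [rightsideDown]; exact decide_eq_false hq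
  · rw [downPattern.eq_def, if_neg hd]
    symm; simp only [rightsideDown]; exact decide_eq_false (by omega)

lemma top_wit (n c : ℕ) (hn : 2 ≤ n) (hc : c % 2 = 1) (hc3 : c ≤ 3) :
    downPattern (2*n+1) (2^(2*n+1)-1) c = topsideDown (2*n+1) := by
  obtain ⟨M, hM1, hM2⟩ := powfact n hn
  funext q; obtain ⟨k,m⟩ := q
  by_cases hd : k < 2*n+1 ∧ m ≤ 2*(2*n+1-1-k)
  · rw [dp_eq hd.1 hd.2]
    rcases Nat.mod_two_eq_zero_or_one m with hm|hm
    · rw [filled_odd_col _ _ (by omega)]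
      symm; simp only [topsideDown]; exact decide_eq_false (by omega)
    · rcases Nat.eq_zero_or_pos k with hk|hk
      · subst hk
        rw [filled_true_of_choose (by omega)
          (by rw [show 2^(2*n+1)-1+0 = 2^(2*n+1)-1 from by omega]
              exact F4 _ _ (by omega))]
        symm; simp only [topsideDown]
        exact decide_eq_true ⟨trivial, hm, by omega, by omega⟩
      · rw [filled_false_of_choose
          (by rw [show 2^(2*n+1)-1+k = 2^(2*n+1)+(k-1) from by omega]
              exact F1 _ _ _ (by omega) (by omega))]
        symm; simp only [topsideDown]; exact decide_eq_false (by omega)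
  · rw [downPattern.eq_def, if_neg hd]
    symm; simp only [topsideDown]; exact decide_eq_false (by omega)

lemma left_wit (n t : ℕ) (hn : 2 ≤ n) (ht : 1 ≤ t) (ht2 : t ≤ 2) :
    downPattern (2*n+1) (2^(2*n+1)+t) (2*t-1) = leftsideDown (2*n+1) := by
  obtain ⟨M, hM1, hM2⟩ := powfact n hn
  funext q; obtain ⟨k,m⟩ := q
  by_cases hd : k < 2*n+1 ∧ m ≤ 2*(2*n+1-1-k)
  · rw [dp_eq hd.1 hd.2]
    rcases Nat.mod_two_eq_zero_or_one m with hm|hm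
    · rw [filled_odd_col _ _ (by omega)]
      symm; simp only [leftsideDown]; exact decide_eq_false (by omega)
    · by_cases hq : m = 1
      · subst hq
        rw [filled_true_of_choose (by omega)
          (by rw [show (2*t-1+2*k+1)/2 = t+k from by omega,
                show 2^(2*n+1)+t+k = 2^(2*n+1)+(t+k) from by omega]
              exact F3 _ _ (by omega))]
        symm; simp only [leftsideDown]
        exact decide_eq_true ⟨trivial, by omega⟩
      · rw [filled_false_of_choose
          (by rw [show 2^(2*n+1)+t+k = 2^(2*n+1)+(t+k) from by omega]
              exact F1 _ _ _ (by omega) (by omega))]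
        symm; simp only [leftsideDown]; exact decide_eq_false (by omega)
  · rw [downPattern.eq_def, if_neg hd]
    symm; simp only [leftsideDown]; exact decide_eq_false (by omega)


theorem sierpinski_down_intersections_odd (n : ℕ) (hn : 2 ≤ n) :
    PdownRC (2 * n + 1) 0 1 ∩ PdownRC (2 * n + 1) 1 3 = {blankDown} ∧
    PdownRC (2 * n + 1) 0 1 ∩ PdownRC (2 * n + 1) 1 1 =
      {blankDown, rightsideDown (2 * n + 1)} ∧
    PdownRC (2 * n + 1) 0 1 ∩ PdownRC (2 * n + 1) 0 3 = {blankDown} ∧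
    PdownRC (2 * n + 1) 1 3 ∩ PdownRC (2 * n + 1) 1 1 =
      {blankDown, topsideDown (2 * n + 1)} ∧
    PdownRC (2 * n + 1) 1 3 ∩ PdownRC (2 * n + 1) 0 3 = {blankDown} ∧
    PdownRC (2 * n + 1) 1 1 ∩ PdownRC (2 * n + 1) 0 3 =
      {blankDown, leftsideDown (2 * n + 1)} := by
  obtain ⟨M, hM1, hM2⟩ := powfact n hn
  have hP : (2:ℕ)^(2*n+2) = 2*2^(2*n+1) := by rw [pow_succ]; ring
  have memB : ∀ ρ γ t c, t ≤ 1 → c % 2 = 1 → 2*t+1 ≤ c → c ≤ 5 →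
      (2^(2*n+1)+t) % 2 = ρ → c % 4 = γ → blankDown ∈ PdownRC (2*n+1) ρ γ := by
    intro ρ γ t c h1 h2 h3 h4 h5 h6
    exact ⟨2^(2*n+1)+t, c, h2, by omega, h5, h6,
      (blank_wit n t c hn h1 h2 h3 h4).symm⟩
  refine ⟨?_, ?_, ?_, ?_, ?_, ?_⟩
  · apply Set.eq_of_subset_of_subset
    · rintro p ⟨⟨r,c,hc,hb,hr,hg,rfl⟩, ⟨r',c',hc',hb',hr',hg',hE⟩⟩
      exact funext (fun q => by rw [classA n r c r' c' hc hc' hr hg hr' hg' hE q]; rfl)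
    · rintro p hp
      rw [Set.mem_singleton_iff] at hp; subst hp
      exact ⟨memB 0 1 0 1 (by omega) (by omega) (by omega) (by omega) (by omega) (by omega),
             memB 1 3 1 3 (by omega) (by omega) (by omega) (by omega) (by omega) (by omega)⟩
  · apply Set.eq_of_subset_of_subset
    · rintro p ⟨⟨r,c,hc,hb,hr,hg,rfl⟩, ⟨r',c',hc',hb',hr',hg',hE⟩⟩
      rcases classB n r c r' c' hn hc hc' hr hg hr' hg' hE with h|h
      · exact Or.inl h
      · exact Or.inr h
    · rintro p hp
      rcases hp with hp|hp
      on_goal 2 => rw [Set.mem_singleton_iff] at hp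
      all_goals subst hp
      · exact ⟨memB 0 1 0 1 (by omega) (by omega) (by omega) (by omega) (by omega) (by omega),
               memB 1 1 1 5 (by omega) (by omega) (by omega) (by omega) (by omega) (by omega)⟩
      · constructor
        · exact ⟨2^(2*n+1)+2, 2^(2*n+2)-(4*n-1), by omega, by omega, by omega, by omega,
            (right_wit n 2 hn (by omega) (by omega)).symm⟩
        · exact ⟨2^(2*n+1)+1, 2^(2*n+2)-(4*n-1), by omega, by omega, by omega, by omega,
            (right_wit n 1 hn (by omega) (by omega)).symm⟩
  · apply Set.eq_of_subset_of_subset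
    · rintro p ⟨⟨r,c,hc,hb,hr,hg,rfl⟩, ⟨r',c',hc',hb',hr',hg',hE⟩⟩
      exact funext (fun q => by rw [classC n r c r' c' hc hc' hr hg hr' hg' hE q]; rfl)
    · rintro p hp
      rw [Set.mem_singleton_iff] at hp; subst hp
      exact ⟨memB 0 1 0 1 (by omega) (by omega) (by omega) (by omega) (by omega) (by omega),
             memB 0 3 0 3 (by omega) (by omega) (by omega) (by omega) (by omega) (by omega)⟩
  · apply Set.eq_of_subset_of_subset
    · rintro p ⟨⟨r,c,hc,hb,hr,hg,rfl⟩, ⟨r',c',hc',hb',hr',hg',hE⟩⟩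
      rcases classD n r c r' c' hn hc hc' hr hg hr' hg' hE with h|h
      · exact Or.inl h
      · exact Or.inr h
    · rintro p hp
      rcases hp with hp|hp
      on_goal 2 => rw [Set.mem_singleton_iff] at hp
      all_goals subst hp
      · exact ⟨memB 1 3 1 3 (by omega) (by omega) (by omega) (by omega) (by omega) (by omega),
               memB 1 1 1 5 (by omega) (by omega) (by omega) (by omega) (by omega) (by omega)⟩
      · constructor
        · exact ⟨2^(2*n+1)-1, 3, by omega, by omega, by omega, by omega,
            (top_wit n 3 hn (by omega) (by omega)).symm⟩
        · exact ⟨2^(2*n+1)-1, 1, by omega, by omega, by omega, by omega,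
            (top_wit n 1 hn (by omega) (by omega)).symm⟩
  · apply Set.eq_of_subset_of_subset
    · rintro p ⟨⟨r,c,hc,hb,hr,hg,rfl⟩, ⟨r',c',hc',hb',hr',hg',hE⟩⟩
      exact funext (fun q => by rw [classE n r c r' c' hc hc' hr hg hr' hg' hE q]; rfl)
    · rintro p hp
      rw [Set.mem_singleton_iff] at hp; subst hp
      exact ⟨memB 1 3 1 3 (by omega) (by omega) (by omega) (by omega) (by omega) (by omega),
             memB 0 3 0 3 (by omega) (by omega) (by omega) (by omega) (by omega) (by omega)⟩
  · apply Set.eq_of_subset_of_subset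
    · rintro p ⟨⟨r,c,hc,hb,hr,hg,rfl⟩, ⟨r',c',hc',hb',hr',hg',hE⟩⟩
      rcases classF n r c r' c' hn hc hc' hr hg hr' hg' hE with h|h
      · exact Or.inl h
      · exact Or.inr h
    · rintro p hp
      rcases hp with hp|hp
      on_goal 2 => rw [Set.mem_singleton_iff] at hp
      all_goals subst hp
      · exact ⟨memB 1 1 1 5 (by omega) (by omega) (by omega) (by omega) (by omega) (by omega),
               memB 0 3 0 3 (by omega) (by omega) (by omega) (by omega) (by omega) (by omega)⟩
      · constructor
        · exact ⟨2^(2*n+1)+1, 2*1-1, by omega, by omega, by omega, by omega,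
            (left_wit n 1 hn (by omega) (by omega)).symm⟩
        · exact ⟨2^(2*n+1)+2, 2*2-1, by omega, by omega, by omega, by omega,
            (left_wit n 2 hn (by omega) (by omega)).symm⟩
end
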